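/- arXiv:1305.0339 — 2 statements merged into one kernel-verified Lean document; each statement's English description precedes it below -/
import Mathlib

section
/- Let c > 0, z ∈ ℂ, let G and F be probability measures on ℝ, and let u, v be nonzero complex numbers such that t + u ≠ 0 G-almost everywhere, t + v ≠ 0 for G- and F-almost every t, the integrals below exist, and z = −1/u + c ∫ (t+u)^{-1} dG(t) and z = −1/v + c ∫ (t+v)^{-1} dF(t). If D := 1 − c·u·v·∫ ((t+u)(t+v))^{-1} dG(t) ≠ 0, then u − v = −c·u·v·[ ∫ (t+v)^{-1} dG(t) − ∫ (t+v)^{-1} dF(t) ] / D. -/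
/-!
The two self-consistent equations give `1/v - 1/u = c (∫ (t+v)⁻¹ dF - ∫ (t+u)⁻¹ dG)`.
Splitting the right side through `∫ (t+v)⁻¹ dG` and applying the resolvent identity
`(t+u)⁻¹ - (t+v)⁻¹ = (v-u) ((t+u)(t+v))⁻¹` under the `G`-integral turns this into a linear
equation for `u - v` with coefficient `D`.
-/

open MeasureTheory

theorem integral_inv_add_sub_integral_inv_add {α 𝕜 : Type*} [RCLike 𝕜] [MeasurableSpace α]
    {μ : Measure α} {f : α → 𝕜} {u v : 𝕜}
    (hu : ∀ᵐ t ∂μ, f t + u ≠ 0) (hv : ∀ᵐ t ∂μ, f t + v ≠ 0)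
    (hiu : Integrable (fun t => (f t + u)⁻¹) μ) (hiv : Integrable (fun t => (f t + v)⁻¹) μ) :
    ∫ t, (f t + u)⁻¹ ∂μ - ∫ t, (f t + v)⁻¹ ∂μ = (v - u) * ∫ t, ((f t + u) * (f t + v))⁻¹ ∂μ := by
  rw [← integral_sub hiu hiv, ← integral_const_mul]
  refine integral_congr_ae ?_
  filter_upwards [hu, hv] with t htu htv
  field_simp
  ring

theorem sub_eq_div_of_neg_inv_add_mul_eq {K : Type*} [Field K] {c u v A B C I D : K}
    (hu : u ≠ 0) (hv : v ≠ 0) (hD0 : D ≠ 0) (hAB : A - B = (v - u) * I)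
    (hz : -1 / u + c * A = -1 / v + c * C) (hD : D = 1 - c * u * v * I) :
    u - v = -c * u * v * (B - C) / D := by
  rw [eq_div_iff hD0, hD]
  field_simp at hz
  linear_combination hz - c * u * v * hAB

theorem stieltjes_difference_identity_general (c : ℝ) (z : ℂ)
    (G F : Measure ℝ)
    (u v : ℂ) (hu : u ≠ 0) (hv : v ≠ 0)
    (huG : ∀ᵐ (t : ℝ) ∂G, (t : ℂ) + u ≠ 0)
    (hvG : ∀ᵐ (t : ℝ) ∂G, (t : ℂ) + v ≠ 0)
    (hintuG : Integrable (fun t : ℝ => ((t : ℂ) + u)⁻¹) G)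
    (hintvG : Integrable (fun t : ℝ => ((t : ℂ) + v)⁻¹) G)
    (hzu : z = -1 / u + (c : ℂ) * ∫ (t : ℝ), ((t : ℂ) + u)⁻¹ ∂G)
    (hzv : z = -1 / v + (c : ℂ) * ∫ (t : ℝ), ((t : ℂ) + v)⁻¹ ∂F)
    (D : ℂ)
    (hD : D = 1 - (c : ℂ) * u * v * ∫ (t : ℝ), (((t : ℂ) + u) * ((t : ℂ) + v))⁻¹ ∂G)
    (hD0 : D ≠ 0) :
    u - v = -(c : ℂ) * u * v *
        ((∫ (t : ℝ), ((t : ℂ) + v)⁻¹ ∂G) - ∫ (t : ℝ), ((t : ℂ) + v)⁻¹ ∂F) / D :=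
  sub_eq_div_of_neg_inv_add_mul_eq hu hv hD0
    (integral_inv_add_sub_integral_inv_add (f := Complex.ofReal) huG hvG hintuG hintvG)
    (hzu ▸ hzv) hD

/-- Deterministic identity behind display (2.7): if `u`, `v` are nonzero complex numbers
satisfying the self-consistent equations `z = −1/u + c ∫ (t+u)⁻¹ dG(t)` and
`z = −1/v + c ∫ (t+v)⁻¹ dF(t)`, and `D = 1 − c u v ∫ ((t+u)(t+v))⁻¹ dG(t) ≠ 0`, then
`u − v = −c u v [∫ (t+v)⁻¹ dG(t) − ∫ (t+v)⁻¹ dF(t)] / D`. -/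
theorem stieltjes_difference_identity (c : ℝ) (hc : 0 < c) (z : ℂ)
    (G F : Measure ℝ) [IsProbabilityMeasure G] [IsProbabilityMeasure F]
    (u v : ℂ) (hu : u ≠ 0) (hv : v ≠ 0)
    (huG : ∀ᵐ (t : ℝ) ∂G, (t : ℂ) + u ≠ 0)
    (hvG : ∀ᵐ (t : ℝ) ∂G, (t : ℂ) + v ≠ 0)
    (hvF : ∀ᵐ (t : ℝ) ∂F, (t : ℂ) + v ≠ 0)
    (hintuG : Integrable (fun t : ℝ => ((t : ℂ) + u)⁻¹) G)
    (hintvG : Integrable (fun t : ℝ => ((t : ℂ) + v)⁻¹) G)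
    (hintvF : Integrable (fun t : ℝ => ((t : ℂ) + v)⁻¹) F)
    (hintuvG : Integrable (fun t : ℝ => (((t : ℂ) + u) * ((t : ℂ) + v))⁻¹) G)
    (hzu : z = -1 / u + (c : ℂ) * ∫ (t : ℝ), ((t : ℂ) + u)⁻¹ ∂G)
    (hzv : z = -1 / v + (c : ℂ) * ∫ (t : ℝ), ((t : ℂ) + v)⁻¹ ∂F)
    (D : ℂ)
    (hD : D = 1 - (c : ℂ) * u * v * ∫ (t : ℝ), (((t : ℂ) + u) * ((t : ℂ) + v))⁻¹ ∂G)
    (hD0 : D ≠ 0) :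
    u - v = -(c : ℂ) * u * v *
        ((∫ (t : ℝ), ((t : ℂ) + v)⁻¹ ∂G) - ∫ (t : ℝ), ((t : ℂ) + v)⁻¹ ∂F) / D :=
  stieltjes_difference_identity_general c z G F u v hu hv huG hvG hintuG hintvG hzu hzv D hD hD0
end

section
/- Fix z with Im z > 0, y > 0 and τ > 0. Let H_p (for each p) and H be probability measures on [0, τ] with H_p converging weakly to H, and let n = n(p) satisfy p/n → y as p → ∞. Suppose u_p and v_p lie in the upper half-plane and satisfy z = −1/u_p + (p/n) ∫ t/(1 + t u_p) dH_p(t) and z = −1/v_p + (p/(n−1)) ∫ t/(1 + t v_p) dH_p(t), suppose u_p → m̲ and v_p → m̲ where m̲ lies in the upper half-plane and satisfies z = −1/m̲ + y ∫ t/(1 + t m̲) dH(t), and suppose 1/m̲² − y ∫ t²/(1 + t m̲)² dH(t) ≠ 0. Then n(u_p − v_p) → [ y ∫ t/(1 + t m̲) dH(t) ] / [ 1/m̲² − y ∫ t²/(1 + t m̲)² dH(t) ] as p → ∞. -/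
/-!
Subtracting the two Marchenko–Pastur equations and using the resolvent identity
`t/(1+tu) - t/(1+tv) = -(u-v) · t/(1+tu) · t/(1+tv)` gives the exact relation
`n (u - v) (1/(uv) - (p/n) ∫ t/(1+tu) · t/(1+tv) dH_p) = p/(n-1) ∫ t/(1+tv) dH_p`.
Since `u, v → m` inside the upper half-plane, both integrands converge uniformly on `[0, τ]`,
which carries every `H_p`, so weak convergence `H_p → H` passes the integrals to the limit.
The bracket then tends to the nonzero denominator, and dividing by it gives the limit.
-/

open MeasureTheory Filter Topology Set BoundedContinuousFunction

theorem TendstoUniformlyOn.of_continuousOn_prod {X β E ι : Type*} [TopologicalSpace X]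
    [TopologicalSpace β] [UniformSpace E] {f : X → β → E} {U : Set X} {K : Set β} {x : X}
    (hU : U ∈ 𝓝 x) (hK : IsCompact K) (hf : ContinuousOn (fun r : X × β => f r.1 r.2) (U ×ˢ K))
    {l : Filter ι} {w : ι → X} (hw : Tendsto w l (𝓝 x)) :
    TendstoUniformlyOn (fun i => f (w i)) (f x) l K := by
  intro s hs
  obtain ⟨V, hV, hVs⟩ :=
    hK.mem_uniformity_of_prod hf (mem_of_mem_nhds hU) (symm_le_uniformity hs)
  rw [nhdsWithin_eq_nhds.2 hU] at hV
  filter_upwards [hw hV] with i hi t ht using hVs _ hi t ht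

theorem tendsto_integral_of_tendstoUniformlyOn {α E ι : Type*} [MeasurableSpace α]
    [NormedAddCommGroup E] [NormedSpace ℝ E] {l : Filter ι} {μ : ι → Measure α}
    [∀ i, IsProbabilityMeasure (μ i)] {S : Set α} (hμS : ∀ i, μ i Sᶜ = 0)
    {F : ι → α → E} {f : α → E} (hF : ∀ i, Integrable (F i) (μ i))
    (hf : ∀ i, Integrable f (μ i)) (hFf : TendstoUniformlyOn F f l S) {L : E}
    (hfL : Tendsto (fun i => ∫ t, f t ∂μ i) l (𝓝 L)) :
    Tendsto (fun i => ∫ t, F i t ∂μ i) l (𝓝 L) := by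
  have hdiff : Tendsto (fun i => ∫ t, F i t ∂μ i - ∫ t, f t ∂μ i) l (𝓝 0) := by
    refine Metric.tendsto_nhds.2 fun ε hε => ?_
    filter_upwards [Metric.tendstoUniformlyOn_iff.1 hFf (ε / 2) (half_pos hε)] with i hi
    have hae : ∀ᵐ t ∂μ i, ‖F i t - f t‖ ≤ ε / 2 := by
      filter_upwards [measure_eq_zero_iff_ae_notMem.1 (hμS i)] with t ht
      rw [← dist_eq_norm, dist_comm]
      exact (hi t (not_not.1 ht)).le
    rw [dist_zero_right, ← integral_sub (hF i) (hf i)]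
    calc ‖∫ t, F i t - f t ∂μ i‖ ≤ ε / 2 * (μ i).real univ := norm_integral_le_of_norm_le_const hae
      _ < ε := by rw [probReal_univ]; linarith
  simpa using hdiff.add hfL

theorem tendsto_integral_rclike_of_forall_tendsto_integral {α ι 𝕜 : Type*} [MeasurableSpace α]
    [TopologicalSpace α] [OpensMeasurableSpace α] [RCLike 𝕜] {l : Filter ι}
    {μ : ι → Measure α} {ν : Measure α} [∀ i, IsProbabilityMeasure (μ i)] [IsProbabilityMeasure ν]
    (h : ∀ g : α →ᵇ ℝ, Tendsto (fun i => ∫ t, g t ∂μ i) l (𝓝 (∫ t, g t ∂ν)))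
    (g : α →ᵇ 𝕜) : Tendsto (fun i => ∫ t, g t ∂μ i) l (𝓝 (∫ t, g t ∂ν)) :=
  (ProbabilityMeasure.tendsto_iff_forall_integral_rclike_tendsto 𝕜
    (μs := fun i => ⟨μ i, inferInstance⟩) (μ := ⟨ν, inferInstance⟩)).1
    (ProbabilityMeasure.tendsto_iff_forall_integral_tendsto.2 h) g

/-- The integrand `t / (1 + t w)` of the Marchenko–Pastur equation
`z = -1 / m + c ∫ mpKernel m t dH(t)`. -/
noncomputable def mpKernel (w : ℂ) (t : ℝ) : ℂ := t / (1 + t * w)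

theorem Complex.one_add_ofReal_mul_ne_zero {w : ℂ} (hw : 0 < w.im) (t : ℝ) :
    1 + (t : ℂ) * w ≠ 0 := by
  intro h
  have him := congrArg Complex.im h
  have hre := congrArg Complex.re h
  simp only [Complex.add_im, Complex.one_im, Complex.re_ofReal_mul, Complex.im_ofReal_mul,
    Complex.add_re, Complex.one_re, Complex.zero_im, Complex.zero_re, zero_add] at him hre
  rcases mul_eq_zero.1 him with rfl | h0
  · simp at hre
  · exact hw.ne' h0

theorem norm_mpKernel_le {w : ℂ} (hw : 0 < w.im) (t : ℝ) : ‖mpKernel w t‖ ≤ w.im⁻¹ := by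
  have him : |t| * w.im ≤ ‖1 + (t : ℂ) * w‖ := by
    simpa [abs_mul, abs_of_pos hw] using Complex.abs_im_le_norm (1 + (t : ℂ) * w)
  rw [mpKernel, norm_div, Complex.norm_real, Real.norm_eq_abs,
    div_le_iff₀ (norm_pos_iff.2 (Complex.one_add_ofReal_mul_ne_zero hw t))]
  rwa [inv_mul_eq_div, le_div_iff₀ hw]

theorem continuousAt_mpKernel {q : ℂ × ℝ} (hq : 0 < q.1.im) :
    ContinuousAt (fun q : ℂ × ℝ => mpKernel q.1 q.2) q :=
  (Complex.continuous_ofReal.comp continuous_snd).continuousAt.div (by fun_prop)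
    (Complex.one_add_ofReal_mul_ne_zero hq q.2)

theorem continuous_mpKernel {w : ℂ} (hw : 0 < w.im) : Continuous (mpKernel w) :=
  Complex.continuous_ofReal.div (by fun_prop) (Complex.one_add_ofReal_mul_ne_zero hw)

noncomputable def mpKernelBCF (w : ℂ) (hw : 0 < w.im) : ℝ →ᵇ ℂ :=
  .ofNormedAddCommGroup (mpKernel w) (continuous_mpKernel hw) w.im⁻¹ (norm_mpKernel_le hw)

theorem integrable_mpKernel {w : ℂ} (hw : 0 < w.im) (μ : Measure ℝ) [IsFiniteMeasure μ] :
    Integrable (mpKernel w) μ :=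
  (mpKernelBCF w hw).integrable μ

theorem integrable_mpKernel_mul {u v : ℂ} (hu : 0 < u.im) (hv : 0 < v.im) (μ : Measure ℝ)
    [IsFiniteMeasure μ] : Integrable (fun t => mpKernel u t * mpKernel v t) μ :=
  (mpKernelBCF u hu * mpKernelBCF v hv).integrable μ

theorem mpKernel_sub_mpKernel {u v : ℂ} (hu : 0 < u.im) (hv : 0 < v.im) (t : ℝ) :
    mpKernel u t - mpKernel v t = -(u - v) * (mpKernel u t * mpKernel v t) := by
  have := Complex.one_add_ofReal_mul_ne_zero hu t
  have := Complex.one_add_ofReal_mul_ne_zero hv t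
  simp only [mpKernel]
  field_simp
  ring

section KernelIntegrals

variable {ι : Type*} {l : Filter ι} {μ : ι → Measure ℝ} {ν : Measure ℝ}
  [∀ i, IsProbabilityMeasure (μ i)] {K : Set ℝ} {m : ℂ}

theorem tendsto_integral_mpKernel (hK : IsCompact K) (hμK : ∀ i, μ i Kᶜ = 0)
    (hweak : ∀ g : ℝ →ᵇ ℂ, Tendsto (fun i => ∫ t, g t ∂μ i) l (𝓝 (∫ t, g t ∂ν)))
    {w : ι → ℂ} (hw : ∀ i, 0 < (w i).im) (hm : 0 < m.im) (hwm : Tendsto w l (𝓝 m)) :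
    Tendsto (fun i => ∫ t, mpKernel (w i) t ∂μ i) l (𝓝 (∫ t, mpKernel m t ∂ν)) :=
  tendsto_integral_of_tendstoUniformlyOn (F := fun i => mpKernel (w i)) (f := mpKernel m) hμK
    (fun i => integrable_mpKernel (hw i) _) (fun _ => integrable_mpKernel hm _)
    (.of_continuousOn_prod ((Complex.isOpen_im_gt 0).mem_nhds hm) hK
      (fun _ hq => (continuousAt_mpKernel hq.1).continuousWithinAt) hwm)
    (hweak (mpKernelBCF m hm))

theorem tendsto_integral_mpKernel_mul (hK : IsCompact K) (hμK : ∀ i, μ i Kᶜ = 0)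
    (hweak : ∀ g : ℝ →ᵇ ℂ, Tendsto (fun i => ∫ t, g t ∂μ i) l (𝓝 (∫ t, g t ∂ν)))
    {u v : ι → ℂ} (hu : ∀ i, 0 < (u i).im) (hv : ∀ i, 0 < (v i).im) (hm : 0 < m.im)
    (hum : Tendsto u l (𝓝 m)) (hvm : Tendsto v l (𝓝 m)) :
    Tendsto (fun i => ∫ t, mpKernel (u i) t * mpKernel (v i) t ∂μ i) l
      (𝓝 (∫ t, mpKernel m t ^ 2 ∂ν)) := by
  have hcont : ContinuousOn (fun r : (ℂ × ℂ) × ℝ => mpKernel r.1.1 r.2 * mpKernel r.1.2 r.2)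
      (({w | 0 < w.im} ×ˢ {w | 0 < w.im}) ×ˢ K) :=
    fun r hr => ContinuousAt.continuousWithinAt <|
      ((continuousAt_mpKernel (q := (r.1.1, r.2)) hr.1.1).comp
        (f := fun r : (ℂ × ℂ) × ℝ => (r.1.1, r.2)) (by fun_prop)).mul
      ((continuousAt_mpKernel (q := (r.1.2, r.2)) hr.1.2).comp
        (f := fun r : (ℂ × ℂ) × ℝ => (r.1.2, r.2)) (by fun_prop))
  have hU : {w : ℂ | 0 < w.im} ×ˢ {w : ℂ | 0 < w.im} ∈ 𝓝 (m, m) :=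
    prod_mem_nhds ((Complex.isOpen_im_gt 0).mem_nhds hm) ((Complex.isOpen_im_gt 0).mem_nhds hm)
  have hunif := TendstoUniformlyOn.of_continuousOn_prod
    (f := fun (q : ℂ × ℂ) (t : ℝ) => mpKernel q.1 t * mpKernel q.2 t) hU hK hcont
    (hum.prodMk_nhds hvm)
  have hlim : Tendsto (fun i => ∫ t, mpKernel m t * mpKernel m t ∂μ i) l
      (𝓝 (∫ t, mpKernel m t * mpKernel m t ∂ν)) :=
    hweak (mpKernelBCF m hm * mpKernelBCF m hm)
  simp only [sq]
  exact tendsto_integral_of_tendstoUniformlyOn hμK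
    (fun i => integrable_mpKernel_mul (hu i) (hv i) _) (fun _ => integrable_mpKernel_mul hm hm _)
    hunif hlim

end KernelIntegrals

theorem sub_mul_eq_of_mp_equations {μ : Measure ℝ} [IsFiniteMeasure μ] {z u v a b : ℂ}
    (hu : 0 < u.im) (hv : 0 < v.im)
    (hzu : z = -1 / u + a * ∫ t, mpKernel u t ∂μ) (hzv : z = -1 / v + b * ∫ t, mpKernel v t ∂μ) :
    (u - v) * (1 / (u * v) - a * ∫ t, mpKernel u t * mpKernel v t ∂μ) =
      (b - a) * ∫ t, mpKernel v t ∂μ := by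
  have hdiff : ∫ t, mpKernel u t ∂μ - ∫ t, mpKernel v t ∂μ =
      -(u - v) * ∫ t, mpKernel u t * mpKernel v t ∂μ := by
    rw [← integral_sub (integrable_mpKernel hu μ) (integrable_mpKernel hv μ), ← integral_const_mul]
    exact integral_congr_ae (ae_of_all _ (mpKernel_sub_mpKernel hu hv))
  have hu0 : u ≠ 0 := fun h => hu.ne' (by simp [h])
  have hv0 : v ≠ 0 := fun h => hv.ne' (by simp [h])
  have hinv : 1 / (u * v) * (u - v) = 1 / v - 1 / u := by field_simp
  linear_combination hinv - a * hdiff + hzv - hzu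

theorem natCast_mul_sub_mul_eq_of_mp_equations {μ : Measure ℝ} [IsFiniteMeasure μ]
    {z u v P : ℂ} {N : ℕ} (hN : 2 ≤ N) (hu : 0 < u.im) (hv : 0 < v.im)
    (hzu : z = -1 / u + P / N * ∫ t, mpKernel u t ∂μ)
    (hzv : z = -1 / v + P / (N - 1) * ∫ t, mpKernel v t ∂μ) :
    N * (u - v) * (1 / (u * v) - P / N * ∫ t, mpKernel u t * mpKernel v t ∂μ) =
      P / (N - 1) * ∫ t, mpKernel v t ∂μ := by
  have hN0 : (N : ℂ) ≠ 0 := Nat.cast_ne_zero.2 (by omega)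
  have hN1 : (N : ℂ) - 1 ≠ 0 := by
    rw [sub_ne_zero]; exact_mod_cast (by omega : N ≠ 1)
  rw [mul_assoc, sub_mul_eq_of_mp_equations hu hv hzu hzv, ← mul_assoc]
  congr 1
  field_simp
  ring

theorem tendsto_natCast_atTop_of_tendsto_div {n : ℕ → ℕ} {y : ℝ} (hn : ∀ p, 0 < n p)
    (h : Tendsto (fun p : ℕ => (p : ℝ) / n p) atTop (𝓝 y)) :
    Tendsto (fun p => (n p : ℝ)) atTop atTop := by
  have hy : 0 ≤ y := ge_of_tendsto' h fun p => by positivity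
  refine tendsto_atTop_mono' atTop ?_
    (tendsto_natCast_atTop_atTop.atTop_div_const (by linarith : (0 : ℝ) < y + 1))
  filter_upwards [h.eventually (gt_mem_nhds (lt_add_one y))] with p hp
  rw [div_lt_iff₀ (by exact_mod_cast hn p)] at hp
  rw [div_le_iff₀ (by linarith)]
  linarith

theorem tendsto_div_natCast_sub_one {n : ℕ → ℕ} {y : ℝ} (hn : ∀ p, 2 ≤ n p)
    (h : Tendsto (fun p : ℕ => (p : ℝ) / n p) atTop (𝓝 y)) :
    Tendsto (fun p : ℕ => (p : ℝ) / ((n p : ℝ) - 1)) atTop (𝓝 y) := by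
  have hinv : Tendsto (fun p => ((n p : ℝ) - 1)⁻¹) atTop (𝓝 0) :=
    tendsto_inv_atTop_zero.comp <| (tendsto_atTop_add_const_right atTop (-1) <|
      tendsto_natCast_atTop_of_tendsto_div (fun p => by linarith [hn p]) h).congr
        fun _ => (sub_eq_add_neg _ _).symm
  have hsum : Tendsto (fun p : ℕ => (p : ℝ) / n p + (p : ℝ) / n p * ((n p : ℝ) - 1)⁻¹) atTop
      (𝓝 y) := by
    simpa using h.add (h.mul hinv)
  refine hsum.congr fun p => ?_
  have hn0 : (n p : ℝ) ≠ 0 := by have := hn p; positivity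
  have hn1 : (n p : ℝ) - 1 ≠ 0 := by
    rw [sub_ne_zero]; exact_mod_cast (by have := hn p; omega : n p ≠ 1)
  field_simp
  ring

theorem companion_transform_difference_general (z : ℂ) (y τ : ℝ)
    (Hp : ℕ → Measure ℝ) (H : Measure ℝ)
    [∀ p, IsProbabilityMeasure (Hp p)] [IsProbabilityMeasure H]
    (hHpsupp : ∀ p, Hp p (Set.Icc 0 τ)ᶜ = 0)
    (hweak : ∀ g : BoundedContinuousFunction ℝ ℝ,
      Tendsto (fun p => ∫ t, g t ∂(Hp p)) atTop (nhds (∫ t, g t ∂H)))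
    (n : ℕ → ℕ) (hn : ∀ p, 2 ≤ n p)
    (hratio : Tendsto (fun p : ℕ => (p : ℝ) / (n p : ℝ)) atTop (nhds y))
    (u v : ℕ → ℂ) (hu_im : ∀ p, 0 < (u p).im) (hv_im : ∀ p, 0 < (v p).im)
    (hu : ∀ p, z = -1 / u p +
      ((p : ℂ) / (n p : ℂ)) * ∫ (t : ℝ), (t : ℂ) / (1 + (t : ℂ) * u p) ∂(Hp p))
    (hv : ∀ p, z = -1 / v p +
      ((p : ℂ) / ((n p : ℂ) - 1)) * ∫ (t : ℝ), (t : ℂ) / (1 + (t : ℂ) * v p) ∂(Hp p))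
    (m : ℂ) (hm_im : 0 < m.im)
    (hulim : Tendsto u atTop (nhds m)) (hvlim : Tendsto v atTop (nhds m))
    (hden : 1 / m ^ 2 -
      (y : ℂ) * (∫ (t : ℝ), (t : ℂ) ^ 2 / (1 + (t : ℂ) * m) ^ 2 ∂H) ≠ 0) :
    Tendsto (fun p => (n p : ℂ) * (u p - v p)) atTop
      (nhds (((y : ℂ) * ∫ (t : ℝ), (t : ℂ) / (1 + (t : ℂ) * m) ∂H) /
        (1 / m ^ 2 - (y : ℂ) * ∫ (t : ℝ), (t : ℂ) ^ 2 / (1 + (t : ℂ) * m) ^ 2 ∂H))) := by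
  have hweakC := tendsto_integral_rclike_of_forall_tendsto_integral (𝕜 := ℂ) hweak
  have hB := tendsto_integral_mpKernel isCompact_Icc hHpsupp hweakC hv_im hm_im hvlim
  have hJ := tendsto_integral_mpKernel_mul isCompact_Icc hHpsupp hweakC hu_im hv_im hm_im
    hulim hvlim
  rw [show ∫ t, mpKernel m t ^ 2 ∂H = ∫ t, (t : ℂ) ^ 2 / (1 + t * m) ^ 2 ∂H by
    simp only [mpKernel, div_pow]] at hJ
  have hratioC : Tendsto (fun p : ℕ => (p : ℂ) / (n p : ℂ)) atTop (𝓝 (y : ℂ)) := by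
    simpa using hratio.ofReal
  have hratio1C : Tendsto (fun p : ℕ => (p : ℂ) / ((n p : ℂ) - 1)) atTop (𝓝 (y : ℂ)) := by
    simpa using (tendsto_div_natCast_sub_one hn hratio).ofReal
  have hm0 : m ≠ 0 := fun h => hm_im.ne' (by simp [h])
  have hD : Tendsto (fun p => 1 / (u p * v p) - (p : ℂ) / (n p : ℂ) *
      ∫ t, mpKernel (u p) t * mpKernel (v p) t ∂Hp p) atTop
      (𝓝 (1 / m ^ 2 - y * ∫ t, (t : ℂ) ^ 2 / (1 + t * m) ^ 2 ∂H)) := by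
    rw [sq]
    exact (tendsto_const_nhds.div (hulim.mul hvlim) (mul_ne_zero hm0 hm0)).sub (hratioC.mul hJ)
  refine ((hratio1C.mul hB).div hD hden).congr' ?_
  filter_upwards [hD.eventually_ne hden] with p hp
  rw [Pi.div_apply, div_eq_iff hp,
    natCast_mul_sub_mul_eq_of_mp_equations (hn p) (hu_im p) (hv_im p) (hu p) (hv p)]

/-- Companion Stieltjes-transform comparison at sample sizes `n` and `n−1`
(Lemma 4.1, first part).  Here `u p` and `v p` are the companion Stieltjes transforms
at ratios `p/n` and `p/(n−1)` of the MP-type law with population spectral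
distribution `H p`, and `m` is the limiting companion Stieltjes transform. -/
theorem companion_transform_difference (z : ℂ) (hz : 0 < z.im)
    (y τ : ℝ) (hy : 0 < y) (hτ : 0 < τ)
    (Hp : ℕ → Measure ℝ) (H : Measure ℝ)
    [∀ p, IsProbabilityMeasure (Hp p)] [IsProbabilityMeasure H]
    (hHpsupp : ∀ p, Hp p (Set.Icc 0 τ)ᶜ = 0) (hHsupp : H (Set.Icc 0 τ)ᶜ = 0)
    (hweak : ∀ g : BoundedContinuousFunction ℝ ℝ,
      Tendsto (fun p => ∫ t, g t ∂(Hp p)) atTop (nhds (∫ t, g t ∂H)))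
    (n : ℕ → ℕ) (hn : ∀ p, 2 ≤ n p)
    (hratio : Tendsto (fun p : ℕ => (p : ℝ) / (n p : ℝ)) atTop (nhds y))
    (u v : ℕ → ℂ) (hu_im : ∀ p, 0 < (u p).im) (hv_im : ∀ p, 0 < (v p).im)
    (hu : ∀ p, z = -1 / u p +
      ((p : ℂ) / (n p : ℂ)) * ∫ (t : ℝ), (t : ℂ) / (1 + (t : ℂ) * u p) ∂(Hp p))
    (hv : ∀ p, z = -1 / v p +
      ((p : ℂ) / ((n p : ℂ) - 1)) * ∫ (t : ℝ), (t : ℂ) / (1 + (t : ℂ) * v p) ∂(Hp p))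
    (m : ℂ) (hm_im : 0 < m.im)
    (hulim : Tendsto u atTop (nhds m)) (hvlim : Tendsto v atTop (nhds m))
    (hm : z = -1 / m + (y : ℂ) * ∫ (t : ℝ), (t : ℂ) / (1 + (t : ℂ) * m) ∂H)
    (hden : 1 / m ^ 2 -
      (y : ℂ) * (∫ (t : ℝ), (t : ℂ) ^ 2 / (1 + (t : ℂ) * m) ^ 2 ∂H) ≠ 0) :
    Tendsto (fun p => (n p : ℂ) * (u p - v p)) atTop
      (nhds (((y : ℂ) * ∫ (t : ℝ), (t : ℂ) / (1 + (t : ℂ) * m) ∂H) /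
        (1 / m ^ 2 - (y : ℂ) * ∫ (t : ℝ), (t : ℂ) ^ 2 / (1 + (t : ℂ) * m) ^ 2 ∂H))) :=
  companion_transform_difference_general z y τ Hp H hHpsupp hweak n hn hratio u v hu_im hv_im hu hv
    m hm_im hulim hvlim hden
end
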